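/- Fix q ≥ 2 and K ≥ 1, where each layer has M = K·G neurons and the number of neurons per layer is allowed to vary. Let 𝒩(K, q) denote the union over all neuron counts of the sets of functions h^θ : ℝ^d → ℝ computed by the q-layer GroupMax network. Then for every convex function f : ℝ^d → ℝ, every compact set Ĉ ⊆ ℝ^d, and every ε > 0, there exists h ∈ 𝒩(K, q) such that h(x) ≤ f(x) for all x ∈ Ĉ and sup_{x ∈ Ĉ} (f(x) − h(x)) ≤ ε; that is, 𝒩(K, q) approximates f arbitrarily well from below in the sup norm on every compact set. -/
import Mathlib


/-- Index `k*G + l`: the `l`-th element of the `k`-th group of `G` consecutive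
coordinates among `K * G` coordinates. -/
def groupIdx {K G : ℕ} (k : Fin K) (l : Fin G) : Fin (K * G) :=
  finProdFinEquiv (k, l)

/-- The GroupMax activation `ρ : ℝ^{K·G} → ℝ^K`:
`ρ(v)_k = max (v_{kG+1}, …, v_{kG+G})`, the max over the `k`-th group of `G`
consecutive coordinates. -/
noncomputable def groupMaxAct {K G : ℕ} (v : Fin (K * G) → ℝ) : Fin K → ℝ :=
  fun k => ⨆ l : Fin G, v (groupIdx k l)

/-- Entrywise positive part `(A)⁺` of a real matrix. -/
def matPos {m n : Type*} (A : Matrix m n ℝ) : Matrix m n ℝ :=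
  fun i j => max (A i j) 0

/-- Hidden layers of the GroupMax network, with per-layer group counts `K j` and
group sizes `G j` (layer `j+1` of the paper has `K j * G j` neurons):
`gmZ K G A1 A B x 0 = z¹ = ρ(A¹ x + B¹)` and
`gmZ K G A1 A B x (j+1) = z^{j+2} = ρ((A^{j+2})⁺ z^{j+1} + B^{j+2})`. -/
noncomputable def gmZ {d : ℕ} (K G : ℕ → ℕ)
    (A1 : Matrix (Fin (K 0 * G 0)) (Fin d) ℝ)
    (A : (j : ℕ) → Matrix (Fin (K (j + 1) * G (j + 1))) (Fin (K j)) ℝ)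
    (B : (j : ℕ) → Fin (K j * G j) → ℝ)
    (x : Fin d → ℝ) : (j : ℕ) → Fin (K j) → ℝ
  | 0 => groupMaxAct (fun m => A1.mulVec x m + B 0 m)
  | j + 1 => groupMaxAct
      (fun m => (matPos (A j)).mulVec (gmZ K G A1 A B x j) m + B (j + 1) m)

/-- The `q`-layer GroupMax network: hidden layers `z¹, …, z^{q-1}` given by `gmZ`
(so `z^{q-1} = gmZ … (q-2)`), and output
`h^θ(x) = max_{1 ≤ m ≤ Mq} ((A^q)⁺ z^{q-1} + B^q)_m`. -/
noncomputable def groupMaxNet {d : ℕ} (q : ℕ) (K G : ℕ → ℕ) (Mq : ℕ)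
    (A1 : Matrix (Fin (K 0 * G 0)) (Fin d) ℝ)
    (A : (j : ℕ) → Matrix (Fin (K (j + 1) * G (j + 1))) (Fin (K j)) ℝ)
    (B : (j : ℕ) → Fin (K j * G j) → ℝ)
    (Aq : Matrix (Fin Mq) (Fin (K (q - 2))) ℝ) (Bq : Fin Mq → ℝ)
    (x : Fin d → ℝ) : ℝ :=
  ⨆ m : Fin Mq, ((matPos Aq).mulVec (gmZ K G A1 A B x (q - 2)) m + Bq m)


section AuxUniversalApprox

open Set Finset Topology


open Set Finset

/-- Supporting affine minorant of a convex function, `ε`-close at a given point. -/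
lemma exists_affine_minorant {d : ℕ} (f : (Fin d → ℝ) → ℝ)
    (hf : ConvexOn ℝ Set.univ f) {ε : ℝ} (hε : 0 < ε) (x0 : Fin d → ℝ) :
    ∃ (w : Fin d → ℝ) (b : ℝ),
      (∀ x, (∑ j, w j * x j) + b ≤ f x) ∧
      f x0 - ((∑ j, w j * x0 j) + b) < ε := by
  have hcont : Continuous f := hf.locallyLipschitz.continuous
  set epi : Set ((Fin d → ℝ) × ℝ) := {p | f p.1 ≤ p.2} with hepi
  have hconv : Convex ℝ epi := by
    have h := convexOn_iff_convex_epigraph.mp hf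
    have hs : {p : (Fin d → ℝ) × ℝ | p.1 ∈ Set.univ ∧ f p.1 ≤ p.2} = epi := by
      ext p; simp [epi]
    rwa [hs] at h
  have hclosed : IsClosed epi :=
    isClosed_le (hcont.comp continuous_fst) continuous_snd
  have hnot : (x0, f x0 - ε / 2) ∉ epi := by
    simp only [epi, Set.mem_setOf_eq, not_le]
    linarith
  obtain ⟨φ, u, hpu, hub⟩ := geometric_hahn_banach_point_closed hconv hclosed hnot
  set c : ℝ := φ ((0 : Fin d → ℝ), (1 : ℝ)) with hc
  have hφ : ∀ (x : Fin d → ℝ) (t : ℝ), φ (x, t) = φ (x, 0) + t * c := by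
    intro x t
    have hxt : ((x, t) : (Fin d → ℝ) × ℝ) = (x, 0) + t • ((0 : Fin d → ℝ), (1 : ℝ)) := by
      simp [Prod.ext_iff]
    rw [hxt, map_add, map_smul, smul_eq_mul, hc]
  have h1 : u < φ (x0, 0) + f x0 * c := by
    have h := hub (x0, f x0) (by simp [epi])
    rwa [hφ] at h
  have h2 : φ (x0, 0) + (f x0 - ε / 2) * c < u := by
    have h := hpu
    rwa [hφ] at h
  have hcpos : 0 < c := by nlinarith
  have hsum : ∀ x : Fin d → ℝ, φ (x, 0) = ∑ j, x j * φ (Pi.single j 1, 0) := by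
    intro x
    set ψ : ((Fin d → ℝ) →ₗ[ℝ] ℝ) :=
      (φ.toLinearMap).comp (LinearMap.inl ℝ (Fin d → ℝ) ℝ) with hψ
    have he : φ (x, 0) = ψ x := rfl
    rw [he, LinearMap.pi_apply_eq_sum_univ ψ x]
    refine Finset.sum_congr rfl fun j _ => ?_
    have hone : (fun i => if j = i then (1 : ℝ) else 0) = Pi.single j 1 := by
      funext i
      simp [Pi.single_apply, eq_comm]
    rw [smul_eq_mul, hone]
    rfl
  have key : ∀ x : Fin d → ℝ,
      (∑ j, -(φ (Pi.single j 1, 0)) / c * x j) + u / c = (u - φ (x, 0)) / c := by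
    intro x
    rw [hsum x]
    rw [show ∑ j, -(φ (Pi.single j 1, 0)) / c * x j
        = (∑ j, -(x j * φ (Pi.single j 1, 0))) / c by
      rw [Finset.sum_div]; exact Finset.sum_congr rfl fun j _ => by ring]
    rw [Finset.sum_neg_distrib]
    ring
  refine ⟨fun j => -(φ (Pi.single j 1, 0)) / c, u / c, ?_, ?_⟩
  · intro x
    have h3 : u < φ (x, 0) + f x * c := by
      have h := hub (x, f x) (by simp [epi])
      rwa [hφ] at h
    rw [key x, div_le_iff₀ hcpos]
    linarith
  · rw [key x0]
    rw [show f x0 - (u - φ (x0, 0)) / c < ε ↔ f x0 - ε < (u - φ (x0, 0)) / c by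
      constructor <;> intro <;> linarith]
    rw [lt_div_iff₀ hcpos]
    nlinarith

/-- Finitely many affine minorants that are uniformly `ε`-close on a compact set. -/
lemma exists_finite_affine_cover {d : ℕ} (f : (Fin d → ℝ) → ℝ)
    (hf : ConvexOn ℝ Set.univ f) {C : Set (Fin d → ℝ)} (hC : IsCompact C)
    (hne : C.Nonempty) {ε : ℝ} (hε : 0 < ε) :
    ∃ (N : ℕ) (_ : 0 < N) (a : Fin N → Fin d → ℝ) (b : Fin N → ℝ),
      (∀ (x : Fin d → ℝ) (i : Fin N), (∑ j, a i j * x j) + b i ≤ f x) ∧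
      (∀ x ∈ C, ∃ i : Fin N, f x - ((∑ j, a i j * x j) + b i) ≤ ε) := by
  have hcont : Continuous f := hf.locallyLipschitz.continuous
  choose w b hwle hwcl using fun x0 => exists_affine_minorant f hf hε x0
  set U : (Fin d → ℝ) → Set (Fin d → ℝ) :=
    fun y => {x | f x - ((∑ j, w y j * x j) + b y) < ε} with hU
  have hUnhds : ∀ y ∈ C, U y ∈ 𝓝 y := by
    intro y _
    have hopen : IsOpen (U y) := by
      have : Continuous fun x => f x - ((∑ j, w y j * x j) + b y) := by
        apply hcont.sub
        apply Continuous.add _ continuous_const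
        exact continuous_finset_sum _ fun j _ => (continuous_const.mul (continuous_apply j))
      exact isOpen_lt this continuous_const
    exact hopen.mem_nhds (hwcl y)
  obtain ⟨t, htC, hcover⟩ := hC.elim_nhds_subcover U hUnhds
  have htne : t.Nonempty := by
    obtain ⟨x, hx⟩ := hne
    have := hcover hx
    simp only [Set.mem_iUnion] at this
    obtain ⟨y, hy, -⟩ := this
    exact ⟨y, hy⟩
  refine ⟨t.card, Finset.card_pos.mpr htne, fun i => w (t.equivFin.symm i),
    fun i => b (t.equivFin.symm i), fun x i => hwle _ x, ?_⟩
  intro x hx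
  have := hcover hx
  simp only [Set.mem_iUnion] at this
  obtain ⟨y, hy, hxy⟩ := this
  refine ⟨t.equivFin ⟨y, hy⟩, ?_⟩
  simp only [Equiv.symm_apply_apply]
  exact le_of_lt hxy

/-- Group sizes: first layer has groups of size `N`, later layers size `1`. -/
def netGf (N : ℕ) : ℕ → ℕ := fun j => match j with | 0 => N | _ + 1 => 1

/-- First-layer matrix: group `0` holds the affine maps, other groups are zero. -/
def netA1 {d : ℕ} (K N : ℕ) (hK : 0 < K) (a : Fin N → Fin d → ℝ) :
    Matrix (Fin (K * netGf N 0)) (Fin d) ℝ :=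
  fun m i => if (finProdFinEquiv.symm m).1 = (⟨0, hK⟩ : Fin K) then
    a (finProdFinEquiv.symm m).2 i else 0

/-- Inner-layer matrices: every row picks coordinate `0`. -/
def netA (K N : ℕ) (hK : 0 < K) :
    (j : ℕ) → Matrix (Fin (K * netGf N (j + 1))) (Fin K) ℝ :=
  fun _ _ i => if i = (⟨0, hK⟩ : Fin K) then 1 else 0

/-- Biases: first layer holds the affine constants in group `0`, rest are zero. -/
def netB (K N : ℕ) (hK : 0 < K) (b : Fin N → ℝ) :
    (j : ℕ) → Fin (K * netGf N j) → ℝ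
  | 0 => fun m => if (finProdFinEquiv.symm m).1 = (⟨0, hK⟩ : Fin K) then
      b (finProdFinEquiv.symm m).2 else 0
  | _ + 1 => fun _ => 0

lemma gmZ_eval {d : ℕ} (K N : ℕ) (hK : 0 < K) (hN : 0 < N)
    (a : Fin N → Fin d → ℝ) (b : Fin N → ℝ) (x : Fin d → ℝ) (j : ℕ) :
    gmZ (fun _ => K) (netGf N) (netA1 K N hK a) (netA K N hK) (netB K N hK b) x j
      (⟨0, hK⟩ : Fin K)
      = ⨆ i : Fin N, ((∑ jj, a i jj * x jj) + b i) := by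
  haveI : NeZero N := ⟨hN.ne'⟩
  induction j with
  | zero =>
    show groupMaxAct _ _ = _
    unfold groupMaxAct
    refine congrArg iSup (funext fun l => ?_)
    show (netA1 K N hK a).mulVec x (groupIdx _ l) + netB K N hK b 0 (groupIdx _ l) = _
    unfold Matrix.mulVec dotProduct netA1 netB groupIdx
    simp [Equiv.symm_apply_apply]
  | succ j ih =>
    show groupMaxAct _ _ = _
    unfold groupMaxAct
    rw [show (⨆ l : Fin (netGf N (j + 1)), ((matPos (netA K N hK j)).mulVec
        (gmZ (fun _ => K) (netGf N) (netA1 K N hK a) (netA K N hK) (netB K N hK b) x j)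
          (groupIdx ⟨0, hK⟩ l) + netB K N hK b (j + 1) (groupIdx ⟨0, hK⟩ l)))
        = ⨆ l : Fin 1, (gmZ (fun _ => K) (netGf N) (netA1 K N hK a) (netA K N hK)
            (netB K N hK b) x j ⟨0, hK⟩ + 0) from ?_]
    · rw [ciSup_const, add_zero, ih]
    · refine congrArg iSup (funext fun l => ?_)
      congr 1
      simp only [Matrix.mulVec, dotProduct, matPos, netA]
      rw [Finset.sum_eq_single (⟨0, hK⟩ : Fin K)]
      · simp
      · intro i _ hi; simp [hi]
      · simp

/-- Output-layer matrix: the single row picks coordinate `0`. -/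
def netAq (K : ℕ) (hK : 0 < K) : Matrix (Fin 1) (Fin K) ℝ :=
  fun _ i => if i = (⟨0, hK⟩ : Fin K) then 1 else 0

lemma groupMaxNet_eval {d : ℕ} (K N q : ℕ) (hK : 0 < K) (hN : 0 < N)
    (a : Fin N → Fin d → ℝ) (b : Fin N → ℝ) (x : Fin d → ℝ) :
    groupMaxNet q (fun _ => K) (netGf N) 1 (netA1 K N hK a) (netA K N hK)
      (netB K N hK b) (netAq K hK) (fun _ => 0) x
      = ⨆ i : Fin N, ((∑ jj, a i jj * x jj) + b i) := by
  unfold groupMaxNet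
  rw [show (⨆ m : Fin 1, ((matPos (netAq K hK)).mulVec
      (gmZ (fun _ => K) (netGf N) (netA1 K N hK a) (netA K N hK) (netB K N hK b) x (q - 2)) m
        + (fun _ => (0 : ℝ)) m))
      = ⨆ _ : Fin 1, gmZ (fun _ => K) (netGf N) (netA1 K N hK a) (netA K N hK)
          (netB K N hK b) x (q - 2) (⟨0, hK⟩ : Fin K) from ?_]
  · rw [ciSup_const, gmZ_eval K N hK hN a b x (q - 2)]
  · refine congrArg iSup (funext fun m => ?_)
    rw [add_zero]
    simp only [Matrix.mulVec, dotProduct, matPos, netAq]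
    rw [Finset.sum_eq_single (⟨0, hK⟩ : Fin K)]
    · simp
    · intro i _ hi; simp [hi]
    · simp

end AuxUniversalApprox

/-- **Universal approximation, Proposition of the paper.** Fix the
number of layers `q ≥ 2` and the number of groups `K ≥ 1` (each layer `j` has
`M_j = K · G_j` neurons, the widths being free). Then for every convex
`f : ℝ^d → ℝ`, every compact `Ĉ ⊆ ℝ^d` and every `ε > 0`, some function of the
class `𝒩(K, q)` computed by the `q`-layer GroupMax network lies below `f` on `Ĉ`
and within `ε` of `f` on `Ĉ`. -/
theorem groupMaxNet_universal_approx {d : ℕ} (K q : ℕ) (hK : 1 ≤ K) (hq : 2 ≤ q)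
    (f : (Fin d → ℝ) → ℝ) (hf : ConvexOn ℝ Set.univ f)
    (C : Set (Fin d → ℝ)) (hC : IsCompact C)
    (ε : ℝ) (hε : 0 < ε) :
    ∃ (Gf : ℕ → ℕ) (Mq : ℕ)
      (A1 : Matrix (Fin (K * Gf 0)) (Fin d) ℝ)
      (A : (j : ℕ) → Matrix (Fin (K * Gf (j + 1))) (Fin K) ℝ)
      (B : (j : ℕ) → Fin (K * Gf j) → ℝ)
      (Aq : Matrix (Fin Mq) (Fin K) ℝ) (Bq : Fin Mq → ℝ),
      (∀ x ∈ C, groupMaxNet q (fun _ => K) Gf Mq A1 A B Aq Bq x ≤ f x) ∧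
      (∀ x ∈ C, f x - groupMaxNet q (fun _ => K) Gf Mq A1 A B Aq Bq x ≤ ε) := by
  have hK0 : 0 < K := hK
  rcases C.eq_empty_or_nonempty with hCe | hne
  · refine ⟨netGf 1, 1, netA1 K 1 hK0 (fun _ _ => 0), netA K 1 hK0,
      netB K 1 hK0 (fun _ => 0), netAq K hK0, fun _ => 0, ?_, ?_⟩ <;>
      (intro x hx; rw [hCe] at hx; exact absurd hx (Set.notMem_empty x))
  · obtain ⟨N, hN, a, b, hle, hcover⟩ := exists_finite_affine_cover f hf hC hne hε
    haveI : Nonempty (Fin N) := ⟨⟨0, hN⟩⟩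
    refine ⟨netGf N, 1, netA1 K N hK0 a, netA K N hK0, netB K N hK0 b,
      netAq K hK0, fun _ => 0, ?_, ?_⟩
    · intro x _
      rw [groupMaxNet_eval K N q hK0 hN a b x]
      exact ciSup_le fun i => hle x i
    · intro x hx
      rw [groupMaxNet_eval K N q hK0 hN a b x]
      obtain ⟨i, hi⟩ := hcover x hx
      have hsup : (∑ jj, a i jj * x jj) + b i
          ≤ ⨆ i : Fin N, ((∑ jj, a i jj * x jj) + b i) :=
        le_ciSup (Set.Finite.bddAbove (Set.finite_range
          (fun i : Fin N => (∑ jj, a i jj * x jj) + b i))) i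
      linarith
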